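/- Consider the SIR⁽²⁾S model with vaccination. The quadruple (ŝ, 0, r̂₀, r̂₁) with ŝ = D/E, r̂₀ = η_s·(c₂+μ+η₁)/E and r̂₁ = η_s·c₁/E is a stationary state (its entries are nonnegative and sum to 1), and it is the unique stationary state whose i-component equals 0. -/

import Mathlib

/-- A stationary state of the SIR⁽²⁾S model with vaccination: nonnegative entries summing
to 1, satisfying the stationarity equations with vaccination rates ηs, η₁. -/
def IsStationarySIR2SVac (β γ μ c₁ c₂ ηs η₁ s i r₀ r₁ : ℝ) : Prop :=
  0 ≤ s ∧ 0 ≤ i ∧ 0 ≤ r₀ ∧ 0 ≤ r₁ ∧ s + i + r₀ + r₁ = 1 ∧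
  μ - β * s * i + c₂ * r₁ - μ * s - ηs * s = 0 ∧
  β * s * i + (β / 2) * r₁ * i - (γ + μ) * i = 0 ∧
  ηs * s + γ * i - (c₁ + μ) * r₀ + η₁ * r₁ = 0 ∧
  c₁ * r₀ - (β / 2) * r₁ * i - (c₂ + μ + η₁) * r₁ = 0

/-!
With `i = 0` the infection terms drop out and the stationarity conditions become a linear
system in `(s, r₀, r₁)`. Eliminating `r₀ = 1 - s - r₁` leaves two equations whose determinant
is `E`, so the system has exactly one solution, which is the disease-free equilibrium.
-/

section DiseaseFree

variable {F : Type*} [Field F]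

def DiseaseFreeSystem (μ c₁ c₂ ηs η₁ s r₀ r₁ : F) : Prop :=
  s + r₀ + r₁ = 1 ∧
  μ + c₂ * r₁ - μ * s - ηs * s = 0 ∧
  ηs * s - (c₁ + μ) * r₀ + η₁ * r₁ = 0 ∧
  c₁ * r₀ - (c₂ + μ + η₁) * r₁ = 0

variable {μ c₁ c₂ ηs η₁ D E : F}

theorem diseaseFreeSystem_equilibrium (hD : D = (c₁ + μ) * (c₂ + μ) + μ * η₁)
    (hE : E = D + ηs * (c₁ + c₂ + μ + η₁)) (hE₀ : E ≠ 0) :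
    DiseaseFreeSystem μ c₁ c₂ ηs η₁ (D / E) (ηs * (c₂ + μ + η₁) / E) (ηs * c₁ / E) := by
  subst hD hE
  refine ⟨?_, ?_, ?_, ?_⟩ <;> field_simp <;> ring

theorem DiseaseFreeSystem.eq_equilibrium {s r₀ r₁ : F}
    (hD : D = (c₁ + μ) * (c₂ + μ) + μ * η₁) (hE : E = D + ηs * (c₁ + c₂ + μ + η₁))
    (hK : c₁ + c₂ + μ + η₁ ≠ 0) (hE₀ : E ≠ 0) (h : DiseaseFreeSystem μ c₁ c₂ ηs η₁ s r₀ r₁) :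
    s = D / E ∧ r₀ = ηs * (c₂ + μ + η₁) / E ∧ r₁ = ηs * c₁ / E := by
  obtain ⟨hsum, hs, -, hr⟩ := h
  have hsE : s * E = D := by
    rw [hE, hD]
    linear_combination (-(c₁ + c₂ + μ + η₁)) * hs - c₂ * hr + c₁ * c₂ * hsum
  have hr₁E : r₁ * E = ηs * c₁ := by
    refine mul_left_cancel₀ hK ?_
    linear_combination c₁ * E * hsum - E * hr - c₁ * hsE + c₁ * hE
  refine ⟨(eq_div_iff hE₀).2 hsE, (eq_div_iff hE₀).2 ?_, (eq_div_iff hE₀).2 hr₁E⟩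
  linear_combination E * hsum - hsE - hr₁E + hE

end DiseaseFree

theorem isStationarySIR2SVac_zero_iff {β γ μ c₁ c₂ ηs η₁ s r₀ r₁ : ℝ} :
    IsStationarySIR2SVac β γ μ c₁ c₂ ηs η₁ s 0 r₀ r₁ ↔
      0 ≤ s ∧ 0 ≤ r₀ ∧ 0 ≤ r₁ ∧ DiseaseFreeSystem μ c₁ c₂ ηs η₁ s r₀ r₁ := by
  simp only [IsStationarySIR2SVac, DiseaseFreeSystem, mul_zero, add_zero, sub_zero,
    le_refl, true_and]

theorem sir2s_vac_disease_free_equilibrium_general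
    (β γ μ c₁ c₂ ηs η₁ : ℝ) (hμ : 0 < μ)
    (hc₁ : 0 < c₁) (hc₂ : 0 < c₂) (hηs : 0 ≤ ηs) (hη₁ : 0 ≤ η₁)
    (D E shat rhat₀ rhat₁ : ℝ)
    (hD : D = (c₁ + μ) * (c₂ + μ) + μ * η₁)
    (hE : E = D + ηs * (c₁ + c₂ + μ + η₁))
    (hshat : shat = D / E)
    (hrhat₀ : rhat₀ = ηs * (c₂ + μ + η₁) / E)
    (hrhat₁ : rhat₁ = ηs * c₁ / E) :
    IsStationarySIR2SVac β γ μ c₁ c₂ ηs η₁ shat 0 rhat₀ rhat₁ ∧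
    (∀ s i r₀ r₁ : ℝ, IsStationarySIR2SVac β γ μ c₁ c₂ ηs η₁ s i r₀ r₁ → i = 0 →
      s = shat ∧ r₀ = rhat₀ ∧ r₁ = rhat₁) := by
  subst hshat hrhat₀ hrhat₁
  have hK : 0 < c₁ + c₂ + μ + η₁ := by positivity
  have hE₀ : 0 < E := by rw [hE, hD]; positivity
  refine ⟨isStationarySIR2SVac_zero_iff.2 ⟨by rw [hD]; positivity, by positivity, by positivity,
    diseaseFreeSystem_equilibrium hD hE hE₀.ne'⟩, ?_⟩
  rintro s _ r₀ r₁ hst rfl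
  exact (isStationarySIR2SVac_zero_iff.1 hst).2.2.2.eq_equilibrium hD hE hK.ne' hE₀.ne'

/-- The disease-free equilibrium of the SIR⁽²⁾S model with vaccination:
(shat, 0, rhat₀, rhat₁) with shat = D/E, rhat₀ = ηs·(c₂+μ+η₁)/E, rhat₁ = ηs·c₁/E, where
D = (c₁+μ)(c₂+μ) + μ·η₁ and E = D + ηs·(c₁+c₂+μ+η₁), is a stationary state and is
the unique stationary state with i-component zero. -/
theorem sir2s_vac_disease_free_equilibrium
    (β γ μ c₁ c₂ ηs η₁ : ℝ) (hβ : 0 < β) (hγ : 0 < γ) (hμ : 0 < μ)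
    (hc₁ : 0 < c₁) (hc₂ : 0 < c₂) (hηs : 0 ≤ ηs) (hη₁ : 0 ≤ η₁)
    (D E shat rhat₀ rhat₁ : ℝ)
    (hD : D = (c₁ + μ) * (c₂ + μ) + μ * η₁)
    (hE : E = D + ηs * (c₁ + c₂ + μ + η₁))
    (hshat : shat = D / E)
    (hrhat₀ : rhat₀ = ηs * (c₂ + μ + η₁) / E)
    (hrhat₁ : rhat₁ = ηs * c₁ / E) :
    IsStationarySIR2SVac β γ μ c₁ c₂ ηs η₁ shat 0 rhat₀ rhat₁ ∧
    (∀ s i r₀ r₁ : ℝ, IsStationarySIR2SVac β γ μ c₁ c₂ ηs η₁ s i r₀ r₁ → i = 0 →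
      s = shat ∧ r₀ = rhat₀ ∧ r₁ = rhat₁) :=
  sir2s_vac_disease_free_equilibrium_general β γ μ c₁ c₂ ηs η₁ hμ hc₁ hc₂ hηs hη₁ D E shat rhat₀
    rhat₁ hD hE hshat hrhat₀ hrhat₁
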